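/- arXiv:1809.08192 — 2 statements merged into one kernel-verified Lean document; each statement's English description precedes it below -/
import Mathlib

section
/- Let S* be a finite index set. For each n ∈ S*, let Z_n, F̄_n be real m×m matrices, f_n ∈ ℝᵐ, and d_n ∈ ℝ, and assume M_n = Z_n·F̄_n + I is invertible. Additionally let P be a finite set with matrices F̄_p and vectors f_p, scalars d_p for p ∈ P. Suppose vectors v_s, i_s ∈ ℝᵐ and families (v_n, i_n) satisfy: i_s = Σ_{p∈P}(F̄_p·v_s + d_p·f_p) + Σ_{n∈S*} i_n, i_n = F̄_n·v_n + d_n·f_n, and v_s - v_n = Z_n·i_n for all n ∈ S*. Then i_s = Ā·v_s + b, where Ā = Σ_{p∈P} F̄_p + Σ_{n∈S*} F̄_n·M_n⁻¹ and b = Σ_{p∈P} d_p·f_p + Σ_{n∈S*} d_n·(f_n - F̄_n·M_n⁻¹·Z_n·f_n). -/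
/-!
Each line is eliminated on its own: substituting the converter law `i = F v + d f` into Ohm's law
`vs - v = Z i` gives `(Z F + 1) v = vs - d Z f`, so `v`, and with it `i`, is affine in `vs`.
Summing these currents with those of the converters at the root gives the virtual FCM.
-/

open Matrix

theorem mulVec_eq_of_series_impedance {n R : Type*} [Fintype n] [DecidableEq n] [CommRing R]
    {Z F : Matrix n n R} (hM : IsUnit (Z * F + 1)) {f vs v i : n → R} {d : R}
    (hfcm : i = F *ᵥ v + d • f) (hohm : vs - v = Z *ᵥ i) :
    i = (F * (Z * F + 1)⁻¹) *ᵥ vs + d • (f - F *ᵥ ((Z * F + 1)⁻¹ *ᵥ (Z *ᵥ f))) := by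
  have hv : vs - d • (Z *ᵥ f) = (Z * F + 1) *ᵥ v := by
    rw [hfcm, mulVec_add, mulVec_smul, sub_eq_iff_eq_add] at hohm
    rw [add_mulVec, one_mulVec, ← mulVec_mulVec, hohm]
    abel
  have := hM.invertible
  rw [hfcm, ← inv_mulVec_eq_vec hv, mulVec_sub, mulVec_sub, mulVec_smul, mulVec_smul,
    mulVec_mulVec, smul_sub]
  abel

theorem depth_one_reduction {m : ℕ}
    {P S : Type*} [Fintype P] [Fintype S]
    (FbarP : P → Matrix (Fin m) (Fin m) ℝ) (fP : P → Fin m → ℝ) (dP : P → ℝ)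
    (Z FbarS : S → Matrix (Fin m) (Fin m) ℝ) (fS : S → Fin m → ℝ) (dS : S → ℝ)
    (M : S → Matrix (Fin m) (Fin m) ℝ) (hM : ∀ n, M n = Z n * FbarS n + 1)
    (hMinv : ∀ n, IsUnit (M n))
    (vs is : Fin m → ℝ) (vN iN : S → Fin m → ℝ)
    (hkcl : is = (∑ p, (FbarP p *ᵥ vs + dP p • fP p)) + ∑ n, iN n)
    (hfcm : ∀ n, iN n = FbarS n *ᵥ vN n + dS n • fS n)
    (hohm : ∀ n, vs - vN n = Z n *ᵥ iN n) :
    is = (∑ p, FbarP p + ∑ n, FbarS n * (M n)⁻¹) *ᵥ vs +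
      ((∑ p, dP p • fP p) +
        ∑ n, dS n • (fS n - FbarS n *ᵥ ((M n)⁻¹ *ᵥ (Z n *ᵥ fS n)))) := by
  have hline : ∀ n, iN n = (FbarS n * (M n)⁻¹) *ᵥ vs +
      dS n • (fS n - FbarS n *ᵥ ((M n)⁻¹ *ᵥ (Z n *ᵥ fS n))) := fun n => by
    rw [hM n]
    exact mulVec_eq_of_series_impedance (hM n ▸ hMinv n) (hfcm n) (hohm n)
  simp_rw [hkcl, hline, Finset.sum_add_distrib, add_mulVec, sum_mulVec]
  abel
end

section
/- Suppose for each node n in a finite rooted tree T we have an affine map i = A_n·v + b_n (its FCM relation), and each edge (parent m, child n) has impedance matrix Z_{m,n} with Z_{m,n}·A_n' + I invertible at every stage of the bottom-up reduction, where A_n' is the voltage-block of the reduced FCM of the subtree rooted at n. Then there exists a unique affine map (A_T, b_T) such that the current entering the root equals A_T·v_root + b_T for every root voltage v_root, obtained by iterating: (1) summing affine maps of converters at a common node, and (2) the depth-one reduction A ↦ A·(Z·A + I)⁻¹, b ↦ b − A·(Z·A + I)⁻¹·Z·b. -/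
open Matrix

/-- A finite rooted tree of converters: each node carries the affine FCM
relation `i = A ·ᵥ v + b` of the converters attached at that node, and each
edge to a child carries the line impedance matrix `Z`. -/
inductive FTree (m : ℕ) : Type
  | node (A : Matrix (Fin m) (Fin m) ℝ) (b : Fin m → ℝ)
      (children : List (Matrix (Fin m) (Fin m) ℝ × FTree m)) : FTree m

/-- Bottom-up reduction: reduce each child subtree, push it through its line
via `A ↦ A·(Z·A + I)⁻¹`, `b ↦ b − A·(Z·A + I)⁻¹·Z·b`, and sum at the node. -/
noncomputable def FTree.reduce {m : ℕ} : FTree m → Matrix (Fin m) (Fin m) ℝ × (Fin m → ℝ)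
  | .node A b children =>
      let rs := children.attach.map (fun c =>
        let r := FTree.reduce c.1.2
        let Z := c.1.1
        let R := r.1 * (Z * r.1 + 1)⁻¹
        (R, r.2 - R *ᵥ (Z *ᵥ r.2)))
      (A + (rs.map Prod.fst).sum, b + (rs.map Prod.snd).sum)
  decreasing_by
    have h := List.sizeOf_lt_of_mem c.2
    obtain ⟨⟨Z, t⟩, hm⟩ := c
    simp only [Prod.mk.sizeOf_spec, FTree.node.sizeOf_spec] at h ⊢
    omega

/-- The invertibility condition `Z·A' + I` invertible holds at every stage of
the bottom-up reduction. -/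
def FTree.good {m : ℕ} : FTree m → Prop
  | .node _ _ children =>
      ∀ c ∈ children, IsUnit (c.1 * (FTree.reduce c.2).1 + 1) ∧ FTree.good c.2
  decreasing_by
    rename_i hm
    have h := List.sizeOf_lt_of_mem hm
    obtain ⟨Z, t⟩ := c
    simp only [Prod.mk.sizeOf_spec, FTree.node.sizeOf_spec] at h ⊢
    omega

/-- Feasibility of a root voltage/current pair: there exist child voltages and
currents satisfying the child FCM relations (recursively), Ohm's law on each
line, and Kirchhoff's current law at the node. -/
inductive FTree.Feasible {m : ℕ} : FTree m → (Fin m → ℝ) → (Fin m → ℝ) → Prop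
  | node (A : Matrix (Fin m) (Fin m) ℝ) (b : Fin m → ℝ)
      (children : List (Matrix (Fin m) (Fin m) ℝ × FTree m))
      (v i : Fin m → ℝ) (w : ℕ → (Fin m → ℝ) × (Fin m → ℝ))
      (hfeas : ∀ (j : ℕ) (h : j < children.length),
        FTree.Feasible (children.get ⟨j, h⟩).2 (w j).1 (w j).2)
      (hohm : ∀ (j : ℕ) (h : j < children.length),
        v - (w j).1 = (children.get ⟨j, h⟩).1 *ᵥ (w j).2)
      (hkcl : i = A *ᵥ v + b + ∑ j ∈ Finset.range children.length, (w j).2) :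
      FTree.Feasible (.node A b children) v i

/-!
Induct on the tree. At a node, Kirchhoff's law makes the root current the node's own current
`A v + b` plus the line currents `x_c`. By Ohm's law and the induction hypothesis each `x_c` solves
`x_c = A_c (v - Z_c x_c) + b_c`, and when `Z_c A_c + 1` is invertible this linear equation has the
unique solution `x_c = A_c (Z_c A_c + 1)⁻¹ v + (b_c - A_c (Z_c A_c + 1)⁻¹ Z_c b_c)`; summing gives
the reduced map. It is the only affine map describing the tree because `v ↦ A v + b` determines `b`
(at `v = 0`) and then `A`.
-/
namespace Matrix

variable {m n R : Type*} [Fintype n]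

theorem mulVec_add_injective [Ring R] :
    Function.Injective fun p : Matrix m n R × (m → R) => fun v => p.1 *ᵥ v + p.2 := by
  intro p q h
  have hb : p.2 = q.2 := by simpa using congrFun h 0
  refine Prod.ext (ext_iff_mulVec.2 fun v => ?_) hb
  simpa [hb] using congrFun h v

variable [DecidableEq n] [CommRing R]

/-- The FCM `(A', b')` seen at the sending end of a line of impedance `Z` whose receiving end
carries the FCM `p`: a line current `x` drops the voltage from `v` to `v - Z x`. -/
noncomputable def pushThroughLine (Z : Matrix n n R) (p : Matrix n n R × (n → R)) :
    Matrix n n R × (n → R) :=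
  let A' := p.1 * (Z * p.1 + 1)⁻¹
  (A', p.2 - A' *ᵥ (Z *ᵥ p.2))

theorem one_add_mul_mul_mul_inv {A Z : Matrix n n R} (h : IsUnit (Z * A + 1)) :
    (1 + A * Z) * (A * (Z * A + 1)⁻¹) = A := by
  have hAZ : (1 + A * Z) * A = A * (Z * A + 1) := by noncomm_ring
  rw [← Matrix.mul_assoc, hAZ, Matrix.mul_assoc,
    mul_nonsing_inv _ ((isUnit_iff_isUnit_det _).1 h), Matrix.mul_one]

/-- `1 + A Z` is invertible along with `Z A + 1` (Weinstein–Aronszajn), and it sends both `x` and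
the right-hand side to `A v + b`. -/
theorem eq_mulVec_sub_add_iff {A Z : Matrix n n R} (h : IsUnit (Z * A + 1)) (v b x : n → R) :
    x = A *ᵥ (v - Z *ᵥ x) + b ↔
      x = (pushThroughLine Z (A, b)).1 *ᵥ v + (pushThroughLine Z (A, b)).2 := by
  have hU : IsUnit (1 + A * Z) := by
    rw [isUnit_iff_isUnit_det, det_one_add_mul_comm, add_comm, ← isUnit_iff_isUnit_det]
    exact h
  have hkey := one_add_mul_mul_mul_inv h
  have hlhs : x = A *ᵥ (v - Z *ᵥ x) + b ↔ (1 + A * Z) *ᵥ x = A *ᵥ v + b := by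
    simp only [add_mulVec, one_mulVec, mulVec_sub, ← mulVec_mulVec]
    constructor <;> intro hx <;> linear_combination hx
  have hrhs : (1 + A * Z) *ᵥ ((pushThroughLine Z (A, b)).1 *ᵥ v + (pushThroughLine Z (A, b)).2)
      = A *ᵥ v + b := by
    simp only [pushThroughLine, mulVec_add, mulVec_sub, mulVec_mulVec, hkey, ← Matrix.mul_assoc]
    simp only [add_mulVec, one_mulVec, ← mulVec_mulVec]
    abel
  rw [hlhs, ← hrhs, (mulVec_injective_of_isUnit hU).eq_iff]

end Matrix

theorem List.sum_range_length_eq_sum_map {α M : Type*} [AddCommMonoid M] {l : List α}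
    {f : ℕ → M} {g : α → M} (h : ∀ j (hj : j < l.length), f j = g (l.get ⟨j, hj⟩)) :
    ∑ j ∈ Finset.range l.length, f j = (l.map g).sum := by
  rw [Finset.sum_range, ← Fin.sum_univ_fun_getElem]
  exact Finset.sum_congr rfl fun j _ => h j j.2

namespace FTree

open Matrix

variable {m : ℕ}

theorem reduce_node (A : Matrix (Fin m) (Fin m) ℝ) (b : Fin m → ℝ)
    (cs : List (Matrix (Fin m) (Fin m) ℝ × FTree m)) :
    (node A b cs).reduce =
      (A + (cs.map fun c => (pushThroughLine c.1 c.2.reduce).1).sum,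
        b + (cs.map fun c => (pushThroughLine c.1 c.2.reduce).2).sum) := by
  rw [reduce]
  simp only [List.map_map]
  congr 3
  · exact List.attach_map_val (f := fun c : _ × FTree m => (pushThroughLine c.1 c.2.reduce).1)
  · exact List.attach_map_val (f := fun c : _ × FTree m => (pushThroughLine c.1 c.2.reduce).2)

theorem reduce_node_apply (A : Matrix (Fin m) (Fin m) ℝ) (b v : Fin m → ℝ)
    (cs : List (Matrix (Fin m) (Fin m) ℝ × FTree m)) :
    (node A b cs).reduce.1 *ᵥ v + (node A b cs).reduce.2 =
      A *ᵥ v + b + (cs.map fun c =>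
        (pushThroughLine c.1 c.2.reduce).1 *ᵥ v + (pushThroughLine c.1 c.2.reduce).2).sum := by
  have hsum (l : List (Matrix (Fin m) (Fin m) ℝ)) : l.sum *ᵥ v = (l.map (· *ᵥ v)).sum :=
    map_list_sum (mulVec.addMonoidHomLeft v) l
  simp only [reduce_node, add_mulVec, List.sum_map_add, hsum, List.map_map, Function.comp_def]
  abel

theorem feasible_node_iff {A : Matrix (Fin m) (Fin m) ℝ} {b : Fin m → ℝ}
    {cs : List (Matrix (Fin m) (Fin m) ℝ × FTree m)}
    (hcs : ∀ c ∈ cs, IsUnit (c.1 * c.2.reduce.1 + 1) ∧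
      ∀ v i, c.2.Feasible v i ↔ i = c.2.reduce.1 *ᵥ v + c.2.reduce.2)
    (v i : Fin m → ℝ) :
    (node A b cs).Feasible v i ↔ i = (node A b cs).reduce.1 *ᵥ v + (node A b cs).reduce.2 := by
  rw [reduce_node_apply]
  set current := fun c : Matrix (Fin m) (Fin m) ℝ × FTree m =>
    (pushThroughLine c.1 c.2.reduce).1 *ᵥ v + (pushThroughLine c.1 c.2.reduce).2
  have hline : ∀ c ∈ cs, ∀ x, c.2.Feasible (v - c.1 *ᵥ x) x ↔ x = current c := fun c hc x => by
    rw [(hcs c hc).2, eq_mulVec_sub_add_iff (hcs c hc).1]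
  constructor
  · rintro ⟨_, _, _, _, _, w, hfeas, hohm, rfl⟩
    refine congrArg _ (List.sum_range_length_eq_sum_map fun j hj => ?_)
    have hw : (w j).1 = v - (cs.get ⟨j, hj⟩).1 *ᵥ (w j).2 := by rw [← hohm j hj, sub_sub_cancel]
    exact (hline _ (List.get_mem _ _) _).1 (hw ▸ hfeas j hj)
  · rintro rfl
    let w j := if h : j < cs.length then
      (v - (cs.get ⟨j, h⟩).1 *ᵥ current (cs.get ⟨j, h⟩), current (cs.get ⟨j, h⟩)) else 0
    refine .node A b cs v _ w (fun j hj => ?_) (fun j hj => ?_) ?_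
    · simp only [w, dif_pos hj]
      exact (hline _ (List.get_mem _ _) _).2 rfl
    · simp only [w, dif_pos hj, sub_sub_cancel]
    · exact congrArg _
        (List.sum_range_length_eq_sum_map fun j hj => by simp only [w, dif_pos hj]).symm

theorem feasible_iff_of_good : ∀ t : FTree m, t.good →
    ∀ v i, t.Feasible v i ↔ i = t.reduce.1 *ᵥ v + t.reduce.2
  | .node A b cs, hgood => by
    rw [good] at hgood
    exact feasible_node_iff fun c hc => ⟨(hgood c hc).1, feasible_iff_of_good c.2 (hgood c hc).2⟩
termination_by t => sizeOf t
decreasing_by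
  have h := List.sizeOf_lt_of_mem hc
  obtain ⟨Z, t⟩ := c
  simp only [Prod.mk.sizeOf_spec, node.sizeOf_spec] at h ⊢
  omega

end FTree

/-- For a finite tree of converters satisfying the invertibility condition at
each reduction stage, there exists a unique affine map `(A_T, b_T)`—the one
obtained by the bottom-up reduction—such that the root current equals
`A_T ·ᵥ v + b_T` for every root voltage `v`. -/
theorem tree_reduction {m : ℕ} (t : FTree m) (hgood : t.good) :
    (∀ v i : Fin m → ℝ, t.Feasible v i ↔ i = t.reduce.1 *ᵥ v + t.reduce.2) ∧
    ∀ (A' : Matrix (Fin m) (Fin m) ℝ) (b' : Fin m → ℝ),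
      (∀ v i : Fin m → ℝ, t.Feasible v i → i = A' *ᵥ v + b') →
      A' = t.reduce.1 ∧ b' = t.reduce.2 := by
  have hfeas := t.feasible_iff_of_good hgood
  refine ⟨hfeas, fun A' b' hAb => Prod.ext_iff.1 (Matrix.mulVec_add_injective
    (a₁ := (A', b')) (a₂ := t.reduce) (funext fun v => ?_))⟩
  exact (hAb v _ ((hfeas v _).2 rfl)).symm
end
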